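/- Let u, v : ℝ × ℝ → ℝ be smooth (C^∞) functions of (t, x) and let a, b, c, ε, κ, λ, σ be real constants with a = b, ε = 0, σ = 0 and a ≠ 0. If (u, v) solves the BBM-KdV system, then for every real number s the scaled pair ũ(t,x) = (exp(−4·a·s)·(a·u(exp(−6·a·s)·t, exp(−2·a·s)·x) + c) − c)/a, ṽ(t,x) = exp(−4·a·s)·v(exp(−6·a·s)·t, exp(−2·a·s)·x) also solves the BBM-KdV system. (This is the invariance under the one-parameter group generated by the symmetry 3X₁ + X₃ in the case a = b, where X₁ = (a + b)·(t·∂_t − v·∂_v) − 2·(a·u + c)·∂_u and X₃ = (a + b)·(x·∂_x + v·∂_v) + 2·(a·u + c)·∂_u.) -/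

import Mathlib

open Real

noncomputable def pt (f : ℝ × ℝ → ℝ) : ℝ × ℝ → ℝ :=
  fun p => deriv (fun s => f (s, p.2)) p.1

noncomputable def px (f : ℝ × ℝ → ℝ) : ℝ × ℝ → ℝ :=
  fun p => deriv (fun s => f (p.1, s)) p.2

/-- The BBM-KdV system: F1 = 0 and F2 = 0 everywhere. -/
def BBMKdV (a b c ε κ lam σ : ℝ) (u v : ℝ × ℝ → ℝ) : Prop :=
  (∀ p : ℝ × ℝ, pt u p + (a + b) * v p * px u p + (a * u p + c) * px v p
      + ε * px (px (pt u)) p + κ * px (px (px v)) p = 0) ∧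
  (∀ p : ℝ × ℝ, pt v p + (b * u p + c) * px u p + (a + b) * v p * px v p
      + lam * px (px (px u)) p + σ * px (px (pt v)) p = 0)

lemma sliceDiff_t (f : ℝ × ℝ → ℝ) (hf : ContDiff ℝ (⊤ : ℕ∞) f) (y : ℝ) :
    Differentiable ℝ (fun s => f (s, y)) :=
  (hf.differentiable (by simp)).comp (differentiable_id.prodMk (differentiable_const y))

lemma sliceDiff_x (f : ℝ × ℝ → ℝ) (hf : ContDiff ℝ (⊤ : ℕ∞) f) (t : ℝ) :
    Differentiable ℝ (fun s => f (t, s)) :=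
  (hf.differentiable (by simp)).comp ((differentiable_const t).prodMk differentiable_id)

lemma pt_add_const (f : ℝ × ℝ → ℝ) (B : ℝ) : pt (fun p => f p + B) = pt f := by
  funext p; simp [pt]

lemma px_add_const (f : ℝ × ℝ → ℝ) (B : ℝ) : px (fun p => f p + B) = px f := by
  funext p; simp [px]

lemma pt_mix (f : ℝ × ℝ → ℝ) (hf : ContDiff ℝ (⊤ : ℕ∞) f) (A α β : ℝ) :
    pt (fun p => A * f (α * p.1, β * p.2)) =
      fun p => A * α * pt f (α * p.1, β * p.2) := by
  funext p
  have h1 : HasDerivAt (fun s => f (s, β * p.2)) (pt f (α * p.1, β * p.2)) (α * p.1) :=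
    ((sliceDiff_t f hf (β * p.2)) (α * p.1)).hasDerivAt
  have h2 : HasDerivAt (fun s : ℝ => α * s) α p.1 := by
    simpa using (hasDerivAt_id p.1).const_mul α
  have h3 : HasDerivAt (fun s => f (α * s, β * p.2))
      (pt f (α * p.1, β * p.2) * α) p.1 := h1.comp p.1 h2
  have h4 := (h3.const_mul A).deriv
  show deriv (fun s => A * f (α * s, β * p.2)) p.1 = _
  rw [h4]; ring

lemma px_mix (f : ℝ × ℝ → ℝ) (hf : ContDiff ℝ (⊤ : ℕ∞) f) (A α β : ℝ) :
    px (fun p => A * f (α * p.1, β * p.2)) =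
      fun p => A * β * px f (α * p.1, β * p.2) := by
  funext p
  have h1 : HasDerivAt (fun s => f (α * p.1, s)) (px f (α * p.1, β * p.2)) (β * p.2) :=
    ((sliceDiff_x f hf (α * p.1)) (β * p.2)).hasDerivAt
  have h2 : HasDerivAt (fun s : ℝ => β * s) β p.2 := by
    simpa using (hasDerivAt_id p.2).const_mul β
  have h3 : HasDerivAt (fun s => f (α * p.1, β * s))
      (px f (α * p.1, β * p.2) * β) p.2 := h1.comp p.2 h2
  have h4 := (h3.const_mul A).deriv
  show deriv (fun s => A * f (α * p.1, β * s)) p.2 = _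
  rw [h4]; ring

lemma contDiff_px (f : ℝ × ℝ → ℝ) (hf : ContDiff ℝ (⊤ : ℕ∞) f) : ContDiff ℝ (⊤ : ℕ∞) (px f) := by
  have h : px f = fun p => fderiv ℝ f p (0, 1) := by
    funext p
    have hd : HasFDerivAt f (fderiv ℝ f p) p :=
      ((hf.differentiable (by simp)) p).hasFDerivAt
    have hg : HasDerivAt (fun s => ((p.1, s) : ℝ × ℝ)) ((0 : ℝ), (1 : ℝ)) p.2 :=
      HasDerivAt.prodMk (hasDerivAt_const p.2 p.1) (hasDerivAt_id p.2)
    exact (hd.comp_hasDerivAt p.2 hg).deriv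
  rw [h]
  exact (hf.fderiv_right (by simp)).clm_apply contDiff_const

theorem stmt_17 (u v : ℝ × ℝ → ℝ) (hu : ContDiff ℝ (⊤ : ℕ∞) u) (hv : ContDiff ℝ (⊤ : ℕ∞) v)
    (a b c ε κ lam σ : ℝ)
    (hab : a = b) (he : ε = 0) (hs : σ = 0) (ha : a ≠ 0)
    (hsol : BBMKdV a b c ε κ lam σ u v) :
    ∀ s : ℝ, BBMKdV a b c ε κ lam σ
      (fun p => (Real.exp (-4 * a * s) * (a * u (Real.exp (-6 * a * s) * p.1, Real.exp (-2 * a * s) * p.2) + c) - c) / a)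
      (fun p => Real.exp (-4 * a * s) * v (Real.exp (-6 * a * s) * p.1, Real.exp (-2 * a * s) * p.2)) := by
  intro s
  subst hab he hs
  obtain ⟨h1, h2⟩ := hsol
  set E := Real.exp (-4 * a * s) with hE
  set α := Real.exp (-6 * a * s) with hα
  set β := Real.exp (-2 * a * s) with hβ
  have hUeq : (fun p : ℝ × ℝ => (E * (a * u (α * p.1, β * p.2) + c) - c) / a)
      = fun p => E * u (α * p.1, β * p.2) + (E * c - c) / a := by
    funext p; field_simp; ring
  have hvx := contDiff_px v hv
  have hvxx := contDiff_px _ hvx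
  have hux := contDiff_px u hu
  have huxx := contDiff_px _ hux
  have e1 : E * E * β = E * α := by
    simp only [hE, hα, hβ, ← Real.exp_add]; congr 1; ring
  have e2 : E * β * β * β = E * α := by
    simp only [hE, hα, hβ, ← Real.exp_add]; congr 1; ring
  have hval : ∀ X : ℝ, a * ((E * (a * X + c) - c) / a) + c = E * (a * X + c) := by
    intro X; field_simp; ring
  constructor
  · intro p
    simp only [hUeq, zero_mul, add_zero]
    rw [hval, pt_add_const, pt_mix u hu, px_add_const, px_mix u hu,
      px_mix v hv, px_mix (px v) hvx, px_mix (px (px v)) hvxx]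
    have key := h1 (α * p.1, β * p.2)
    simp only [zero_mul, add_zero] at key
    linear_combination (E * α) * key
      + ((a + a) * v (α * p.1, β * p.2) * px u (α * p.1, β * p.2)
        + (a * u (α * p.1, β * p.2) + c) * px v (α * p.1, β * p.2)) * e1
      + κ * px (px (px v)) (α * p.1, β * p.2) * e2
  · intro p
    simp only [hUeq, zero_mul, add_zero]
    rw [hval, pt_mix v hv, px_add_const, px_mix u hu,
      px_mix (px u) hux, px_mix (px (px u)) huxx, px_mix v hv]
    have key := h2 (α * p.1, β * p.2)
    simp only [zero_mul, add_zero] at key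
    linear_combination (E * α) * key
      + ((a * u (α * p.1, β * p.2) + c) * px u (α * p.1, β * p.2)
        + (a + a) * v (α * p.1, β * p.2) * px v (α * p.1, β * p.2)) * e1
      + lam * px (px (px u)) (α * p.1, β * p.2) * e2
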